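/- Let A be a commutative ring, t ∈ A, and define Ĝ_III(A) = {(e, b(W)) ∈ A × A[[W]] : e − 1 and all coefficients of b(W) are nilpotent} with product (e, b(W)) ⋆ (g, c(W)) = (eg, b(gW + (g−1)t) + c(W)). Then Ĝ_III(A) is a group with unit (1, 0) and inverse (e, b(W))⁻¹ = (e⁻¹, −b(e⁻¹W + (e⁻¹−1)t)). -/

import Mathlib

/-- Substitution of the linear polynomial `uW + c` (with `c` nilpotent) into a
power series `b(W)`. -/
noncomputable def substLin {A : Type*} [CommRing A] (u c : A)
    (b : PowerSeries A) : PowerSeries A :=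
  PowerSeries.mk fun n => ∑ᶠ k : ℕ, PowerSeries.coeff k b *
    ((Polynomial.C u * Polynomial.X + Polynomial.C c) ^ k).coeff n

/-- `Ĝ_III(A)`: pairs `(e, b(W))` with `e - 1` and all coefficients of
`b(W)` nilpotent. -/
def GIII (A : Type*) [CommRing A] : Set (A × PowerSeries A) :=
  {p | IsNilpotent (p.1 - 1) ∧ ∀ n : ℕ, IsNilpotent (PowerSeries.coeff n p.2)}

/-- The product `(e,b(W)) ⋆ (g,c(W)) = (eg, b(gW + (g-1)t) + c(W))`. -/
noncomputable def mulIII {A : Type*} [CommRing A] (t : A)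
    (x y : A × PowerSeries A) : A × PowerSeries A :=
  (x.1 * y.1, substLin y.1 ((y.1 - 1) * t) x.2 + y.2)

/-- The inverse `(e, b(W))⁻¹ = (e⁻¹, -b(e⁻¹W + (e⁻¹-1)t))`. -/
noncomputable def invIII {A : Type*} [CommRing A] (t : A)
    (x : A × PowerSeries A) : A × PowerSeries A :=
  (Ring.inverse x.1,
    -(substLin (Ring.inverse x.1) ((Ring.inverse x.1 - 1) * t) x.2))

/-! For nilpotent `c`, `substLin u c b` is the power-series substitution `b(uW + c)` of
`PowerSeries.subst`, which is defined because the constant term `c` is nilpotent. Hence it is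
additive in `b` and composes like substitutions: `b(uW + c)` evaluated at `u'W + c'` is
`b(uu'W + (uc' + c))`. For `c = (g - 1)t` this is associativity of `⋆`, since
`e((g - 1)t) + (e - 1)t = (eg - 1)t`, and with `g = e⁻¹` it shows that the inverse is also a
left inverse. -/

open PowerSeries

section Substitution

variable {A : Type*} [CommRing A]

lemma hasSubst_C_mul_X_add_C (u : A) {c : A} (hc : IsNilpotent c) :
    HasSubst (C u * X + C c : A⟦X⟧) := by
  change IsNilpotent (constantCoeff _)
  simpa using hc

lemma substLin_eq_subst (u : A) {c : A} (hc : IsNilpotent c) (b : A⟦X⟧) :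
    substLin u c b = b.subst (C u * X + C c : A⟦X⟧) := by
  ext n
  rw [substLin, coeff_mk, coeff_subst' (hasSubst_C_mul_X_add_C u hc)]
  simp [← Polynomial.coeff_coe]

lemma substLin_add (u : A) {c : A} (hc : IsNilpotent c) (b b' : A⟦X⟧) :
    substLin u c (b + b') = substLin u c b + substLin u c b' := by
  simp only [substLin_eq_subst u hc, subst_add (hasSubst_C_mul_X_add_C u hc)]

lemma substLin_neg (u : A) {c : A} (hc : IsNilpotent c) (b : A⟦X⟧) :
    substLin u c (-b) = -substLin u c b := by
  simp only [substLin_eq_subst u hc, ← coe_substAlgHom (hasSubst_C_mul_X_add_C u hc), map_neg]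

lemma substLin_zero (u c : A) : substLin u c 0 = 0 := by
  ext n
  simp [substLin]

lemma substLin_one_zero (b : A⟦X⟧) : substLin 1 0 b = b := by
  simp [substLin_eq_subst (1 : A) IsNilpotent.zero]

lemma substLin_substLin (u u' : A) {c c' : A} (hc : IsNilpotent c) (hc' : IsNilpotent c')
    (b : A⟦X⟧) :
    substLin u' c' (substLin u c b) = substLin (u * u') (u * c' + c) b := by
  have hc'' : IsNilpotent (u * c' + c) :=
    (Commute.all _ _).isNilpotent_add ((Commute.all _ _).isNilpotent_mul_left hc') hc
  rw [substLin_eq_subst u hc, substLin_eq_subst u' hc', substLin_eq_subst _ hc'',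
    subst_comp_subst_apply (hasSubst_C_mul_X_add_C u hc) (hasSubst_C_mul_X_add_C u' hc'),
    ← coe_substAlgHom (hasSubst_C_mul_X_add_C u' hc')]
  congr 1
  simp only [map_add, map_mul, substAlgHom_X, C_eq_algebraMap, AlgHom.commutes]
  ring

lemma isNilpotent_coeff_substLin (u : A) {c : A} (hc : IsNilpotent c) {b : A⟦X⟧}
    (hb : ∀ n, IsNilpotent (coeff n b)) (n : ℕ) : IsNilpotent (coeff n (substLin u c b)) := by
  rw [substLin_eq_subst u hc, coeff_subst' (hasSubst_C_mul_X_add_C u hc)]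
  exact finsum_induction _ IsNilpotent.zero (fun _ _ => (Commute.all _ _).isNilpotent_add)
    fun k => (Commute.all _ _).isNilpotent_mul_right (hb k)

end Substitution

section Group

variable {A : Type*} [CommRing A] (t : A)

lemma isUnit_of_isNilpotent_sub_one {e : A} (he : IsNilpotent (e - 1)) : IsUnit e := by
  simpa using he.isUnit_add_one

lemma isNilpotent_inverse_sub_one {e : A} (he : IsNilpotent (e - 1)) :
    IsNilpotent (Ring.inverse e - 1) := by
  have hu := isUnit_of_isNilpotent_sub_one he
  have h : Ring.inverse e - 1 = -(Ring.inverse e * (e - 1)) := by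
    rw [mul_sub, Ring.inverse_mul_cancel e hu]
    ring
  rw [h]
  exact ((Commute.all _ _).isNilpotent_mul_left he).neg

lemma mulIII_mem_GIII {x y : A × A⟦X⟧} (hx : x ∈ GIII A) (hy : y ∈ GIII A) :
    mulIII t x y ∈ GIII A := by
  refine ⟨?_, fun n => ?_⟩
  · change IsNilpotent (x.1 * y.1 - 1)
    rw [show x.1 * y.1 - 1 = (x.1 - 1) * y.1 + (y.1 - 1) by ring]
    exact (Commute.all _ _).isNilpotent_add ((Commute.all _ _).isNilpotent_mul_right hx.1) hy.1
  · rw [mulIII, map_add]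
    exact (Commute.all _ _).isNilpotent_add
      (isNilpotent_coeff_substLin _ ((Commute.all _ _).isNilpotent_mul_right hy.1) hx.2 n)
      (hy.2 n)

lemma mulIII_assoc (x : A × A⟦X⟧) {y z : A × A⟦X⟧} (hy : y ∈ GIII A) (hz : z ∈ GIII A) :
    mulIII t (mulIII t x y) z = mulIII t x (mulIII t y z) := by
  have hy' := (Commute.all _ t).isNilpotent_mul_right hy.1
  have hz' := (Commute.all _ t).isNilpotent_mul_right hz.1
  refine Prod.ext (mul_assoc _ _ _) ?_
  simp only [mulIII]
  rw [substLin_add _ hz', substLin_substLin _ _ hy' hz', add_assoc,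
    show y.1 * ((z.1 - 1) * t) + (y.1 - 1) * t = (y.1 * z.1 - 1) * t by ring]

lemma mulIII_one (x : A × A⟦X⟧) : mulIII t x (1, 0) = x := by
  simp [mulIII, substLin_one_zero]

lemma one_mulIII (x : A × A⟦X⟧) : mulIII t (1, 0) x = x := by
  simp [mulIII, substLin_zero]

lemma invIII_mem_GIII {x : A × A⟦X⟧} (hx : x ∈ GIII A) : invIII t x ∈ GIII A := by
  have hinv := isNilpotent_inverse_sub_one hx.1
  refine ⟨hinv, fun n => ?_⟩
  rw [invIII, map_neg]
  exact (isNilpotent_coeff_substLin _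
    ((Commute.all _ _).isNilpotent_mul_right hinv) hx.2 n).neg

lemma mulIII_invIII {x : A × A⟦X⟧} (hx : x ∈ GIII A) : mulIII t x (invIII t x) = (1, 0) := by
  have hu := isUnit_of_isNilpotent_sub_one hx.1
  exact Prod.ext (Ring.mul_inverse_cancel _ hu) (add_neg_cancel _)

lemma invIII_mulIII {x : A × A⟦X⟧} (hx : x ∈ GIII A) : mulIII t (invIII t x) x = (1, 0) := by
  have hu := isUnit_of_isNilpotent_sub_one hx.1
  have hinv := (Commute.all _ t).isNilpotent_mul_right (isNilpotent_inverse_sub_one hx.1)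
  have hx' := (Commute.all _ t).isNilpotent_mul_right hx.1
  refine Prod.ext (Ring.inverse_mul_cancel _ hu) ?_
  simp only [mulIII, invIII]
  rw [substLin_neg _ hx', substLin_substLin _ _ hinv hx',
    show Ring.inverse x.1 * ((x.1 - 1) * t) + (Ring.inverse x.1 - 1) * t
      = (Ring.inverse x.1 * x.1 - 1) * t by ring,
    Ring.inverse_mul_cancel _ hu, sub_self, zero_mul, substLin_one_zero, neg_add_cancel]

end Group

/-- `Ĝ_III(A)` is a group under `⋆` with unit `(1,0)` and inverse
`(e⁻¹, -b(e⁻¹W + (e⁻¹-1)t))`. -/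
theorem GIII_is_group (A : Type*) [CommRing A] (t : A) :
    (∀ x ∈ GIII A, ∀ y ∈ GIII A, mulIII t x y ∈ GIII A) ∧
    (∀ x ∈ GIII A, ∀ y ∈ GIII A, ∀ z ∈ GIII A,
      mulIII t (mulIII t x y) z = mulIII t x (mulIII t y z)) ∧
    (((1 : A), (0 : PowerSeries A)) ∈ GIII A ∧
      ∀ x ∈ GIII A, mulIII t x (1, 0) = x ∧ mulIII t (1, 0) x = x) ∧
    (∀ x ∈ GIII A, invIII t x ∈ GIII A ∧
      mulIII t x (invIII t x) = (1, 0) ∧ mulIII t (invIII t x) x = (1, 0)) :=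
  ⟨fun _ hx _ hy => mulIII_mem_GIII t hx hy,
    fun x _ _ hy _ hz => mulIII_assoc t x hy hz,
    ⟨⟨by simp [GIII], fun x _ => ⟨mulIII_one t x, one_mulIII t x⟩⟩,
    fun _ hx => ⟨invIII_mem_GIII t hx, mulIII_invIII t hx, invIII_mulIII t hx⟩⟩⟩
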